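/- arXiv:2410.11500 — 4 statements merged into one kernel-verified Lean document; each statement's English description precedes it below -/
import Mathlib

section
/- Let f₁,…,f_d be elements of a Hilbert space H with ‖g_j‖ ≤ b for each j, let w₁,…,w_d ≥ 0 with α := Σ_j w_j ≤ 1, and let f = Σ_{j=1}^d w_j g_j. Then for every integer t ≥ 1 there exist non-negative integers k₁,…,k_d with Σ_j k_j ≤ t such that ‖f − (1/t)·Σ_{j=1}^d k_j g_j‖² ≤ (α·b² − ‖f‖²)/t. -/
/-!
Greedy derandomization of Maurey's empirical method. Put the missing mass `1 - α` on the zero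
vector, so that `f` is the mean of a probability distribution on `{0, g₁, …, g_d}` with variance
`V = ∑ w_j ‖g_j‖² - ‖f‖² ≤ α b² - ‖f‖²`. For any error vector `e`, the average of
`‖e + (f - X)‖²` over this distribution is `‖e‖² + V`, so some atom `X` does at least as well.
Adding such atoms one at a time keeps `‖t f - (X₁ + ⋯ + X_t)‖² ≤ t V`; dividing by `t` gives
the bound.
-/

open Finset

section Sparsification

variable {ι : Type*} [Fintype ι]

lemma exists_le_sum_mul_of_sum_eq_one {R : Type*} [Semiring R] [LinearOrder R] [IsOrderedRing R]
    [Nontrivial R] {p : ι → R} (hp₀ : ∀ i, 0 ≤ p i) (hp₁ : ∑ i, p i = 1) (F : ι → R) :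
    ∃ i, F i ≤ ∑ i, p i * F i := by
  have hne : (univ : Finset ι).Nonempty := nonempty_of_sum_ne_zero (hp₁ ▸ one_ne_zero)
  obtain ⟨i, -, hi⟩ := exists_min_image univ F hne
  refine ⟨i, ?_⟩
  calc F i = ∑ j, p j * F i := by rw [← sum_mul, hp₁, one_mul]
    _ ≤ ∑ j, p j * F j :=
      sum_le_sum fun j _ => mul_le_mul_of_nonneg_left (hi j (mem_univ j)) (hp₀ j)

variable {p : ι → ℝ} {H : Type*} [NormedAddCommGroup H] [InnerProductSpace ℝ H]

lemma sum_mul_norm_sub_sq (hp₁ : ∑ i, p i = 1) (x : ι → H) (y : H) :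
    ∑ i, p i * ‖y - x i‖ ^ 2
      = ‖y - ∑ i, p i • x i‖ ^ 2 + (∑ i, p i * ‖x i‖ ^ 2 - ‖∑ i, p i • x i‖ ^ 2) := by
  have hinner : inner ℝ y (∑ i, p i • x i) = ∑ i, p i * inner ℝ y (x i) := by
    simp only [inner_sum, real_inner_smul_right]
  simp only [norm_sub_sq_real, mul_add, mul_sub, sum_add_distrib, sum_sub_distrib, ← sum_mul,
    hp₁, hinner, mul_sum]
  ring_nf

lemma exists_norm_add_sub_sq_le (hp₀ : ∀ i, 0 ≤ p i) (hp₁ : ∑ i, p i = 1) (x : ι → H) (e : H) :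
    ∃ i, ‖e + (∑ j, p j • x j - x i)‖ ^ 2
      ≤ ‖e‖ ^ 2 + (∑ j, p j * ‖x j‖ ^ 2 - ‖∑ j, p j • x j‖ ^ 2) := by
  obtain ⟨i, hi⟩ := exists_le_sum_mul_of_sum_eq_one hp₀ hp₁
    fun i => ‖(e + ∑ j, p j • x j) - x i‖ ^ 2
  rw [sum_mul_norm_sub_sq hp₁, add_sub_cancel_right] at hi
  exact ⟨i, by simpa only [add_sub_assoc] using hi⟩

lemma exists_sum_eq_norm_smul_sub_sum_sq_le (hp₀ : ∀ i, 0 ≤ p i) (hp₁ : ∑ i, p i = 1)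
    (x : ι → H) (t : ℕ) :
    ∃ k : ι → ℕ, ∑ i, k i = t ∧ ‖(t : ℝ) • ∑ i, p i • x i - ∑ i, (k i : ℝ) • x i‖ ^ 2
      ≤ t * (∑ i, p i * ‖x i‖ ^ 2 - ‖∑ i, p i • x i‖ ^ 2) := by
  classical
  induction t with
  | zero => exact ⟨0, by simp, by simp⟩
  | succ t ih =>
    obtain ⟨k, hk_sum, hk⟩ := ih
    obtain ⟨i, hi⟩ := exists_norm_add_sub_sq_le hp₀ hp₁ x
      ((t : ℝ) • ∑ i, p i • x i - ∑ i, (k i : ℝ) • x i)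
    refine ⟨k + Pi.single i 1, by simp [sum_add_distrib, hk_sum], ?_⟩
    have hsum : ∑ j, (((k + Pi.single i 1 : ι → ℕ) j : ℕ) : ℝ) • x j
        = ∑ j, (k j : ℝ) • x j + x i := by
      simp [Pi.single_apply, add_smul, sum_add_distrib, ite_smul]
    have hvec : ((t + 1 : ℕ) : ℝ) • ∑ j, p j • x j - (∑ j, (k j : ℝ) • x j + x i)
        = ((t : ℝ) • ∑ j, p j • x j - ∑ j, (k j : ℝ) • x j) + (∑ j, p j • x j - x i) := by
      push_cast
      rw [add_smul, one_smul]
      abel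
    rw [hsum, hvec]
    push_cast
    linarith

lemma exists_sum_eq_norm_sub_inv_smul_sum_sq_le (hp₀ : ∀ i, 0 ≤ p i) (hp₁ : ∑ i, p i = 1)
    (x : ι → H) {t : ℕ} (ht : t ≠ 0) :
    ∃ k : ι → ℕ, ∑ i, k i = t ∧ ‖∑ i, p i • x i - (1 / (t : ℝ)) • ∑ i, (k i : ℝ) • x i‖ ^ 2
      ≤ (∑ i, p i * ‖x i‖ ^ 2 - ‖∑ i, p i • x i‖ ^ 2) / t := by
  obtain ⟨k, hk_sum, hk⟩ := exists_sum_eq_norm_smul_sub_sum_sq_le hp₀ hp₁ x t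
  refine ⟨k, hk_sum, ?_⟩
  have htpos : (0 : ℝ) < t := by positivity
  have hvec : ∑ i, p i • x i - (1 / (t : ℝ)) • ∑ i, (k i : ℝ) • x i
      = (1 / (t : ℝ)) • ((t : ℝ) • ∑ i, p i • x i - ∑ i, (k i : ℝ) • x i) := by
    rw [smul_sub, smul_smul, one_div_mul_cancel htpos.ne', one_smul]
  rw [hvec, norm_smul, mul_pow, Real.norm_of_nonneg (by positivity)]
  calc (1 / (t : ℝ)) ^ 2 * ‖(t : ℝ) • ∑ i, p i • x i - ∑ i, (k i : ℝ) • x i‖ ^ 2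
      ≤ (1 / (t : ℝ)) ^ 2 * (t * (∑ i, p i * ‖x i‖ ^ 2 - ‖∑ i, p i • x i‖ ^ 2)) := by gcongr
    _ = (∑ i, p i * ‖x i‖ ^ 2 - ‖∑ i, p i • x i‖ ^ 2) / t := by field_simp

end Sparsification

theorem stmt_2 {H : Type*} [NormedAddCommGroup H] [InnerProductSpace ℝ H]
    (d : ℕ) (g : Fin d → H) (w : Fin d → ℝ) (b : ℝ) (f : H)
    (hg : ∀ j, ‖g j‖ ≤ b) (hw : ∀ j, 0 ≤ w j) (hα : ∑ j, w j ≤ 1)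
    (hf : f = ∑ j, w j • g j) :
    ∀ t : ℕ, 1 ≤ t → ∃ k : Fin d → ℕ, (∑ j, k j) ≤ t ∧
      ‖f - (1 / (t : ℝ)) • ∑ j, (k j : ℝ) • g j‖ ^ 2
        ≤ ((∑ j, w j) * b ^ 2 - ‖f‖ ^ 2) / (t : ℝ) := by
  intro t ht
  let p : Option (Fin d) → ℝ := fun o => o.elim (1 - ∑ j, w j) w
  let x : Option (Fin d) → H := fun o => o.elim 0 g
  have hp₀ : ∀ o, 0 ≤ p o := fun o => o.rec (sub_nonneg.2 hα) hw
  have hp₁ : ∑ o, p o = 1 := by simp [p, Fintype.sum_option]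
  have hm : ∑ o, p o • x o = f := by simp [p, x, Fintype.sum_option, hf]
  have hvar : ∑ o, p o * ‖x o‖ ^ 2 ≤ (∑ j, w j) * b ^ 2 := by
    simpa [p, x, Fintype.sum_option, sum_mul] using sum_le_sum fun j _ =>
      mul_le_mul_of_nonneg_left (pow_le_pow_left₀ (norm_nonneg _) (hg j) 2) (hw j)
  obtain ⟨k, hk_sum, hk⟩ := exists_sum_eq_norm_sub_inv_smul_sum_sq_le hp₀ hp₁ x (by omega : t ≠ 0)
  have hx : ∑ o, (k o : ℝ) • x o = ∑ j, (k (some j) : ℝ) • g j := by simp [x, Fintype.sum_option]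
  refine ⟨fun j => k (some j), ?_, ?_⟩
  · rw [← hk_sum, Fintype.sum_option]
    exact Nat.le_add_left _ _
  · rw [hm, hx] at hk
    exact hk.trans (by gcongr)
end

section
/- Let r_w ∈ ℕ₊, let V ⊂ ℝ^k be a subspace of dimension r_w with orthonormal basis matrix E ∈ ℝ^{k×r_w}, and fix p, q ∈ [1,∞) with 1/p + 1/q = 1. Let W := {W ∈ ℝ^{k×d} : col(W) ⊆ V and ‖WᵀE‖_{p,1} ≤ B_w}. Then for every ε > 0 and every x ∈ ℝ^d with ‖x‖_q ≤ B_x, the set {Wx : W ∈ W} admits an ε-cover in ℓ₂ norm of log-cardinality at most (B_x²·B_w²/ε²)·log(2·r_w + 1). -/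
/-!
The columns of `W` lie in `V`, of which `E` is an orthonormal basis, so `Wx = ∑ⱼ aⱼ Eⱼ` with
`aⱼ = ⟪Eⱼ, Wx⟫ = ⟪Wᵀ Eⱼ, x⟫`; Hölder's inequality column by column gives
`∑ⱼ |aⱼ| ≤ R := B_w B_x`.
Hence `Wx` is a convex combination of the `2 r_w + 1` atoms `0, ±R Eⱼ`, and Maurey's empirical
method finds an average of `m` atoms within squared distance `(R² - ‖Wx‖²) / m` of `Wx`: choosing
the atoms one at a time, some next atom does no worse than the average over the convex weights.
Together with the approximant `0` this gives squared error at most `R² / (m + 1)`, while there are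
at most `(2 r_w + 1) ^ m` averages of `m` atoms; take `m = ⌊R² / ε²⌋`.
-/

open Finset Matrix Module Submodule

theorem Orthonormal.sum_inner_smul_eq_of_mem {𝕜 F ι : Type*} [RCLike 𝕜] [NormedAddCommGroup F]
    [InnerProductSpace 𝕜 F] [Fintype ι] {e : ι → F} (he : Orthonormal 𝕜 e) {V : Submodule 𝕜 F}
    [FiniteDimensional 𝕜 V] (heV : ∀ j, e j ∈ V) (hV : finrank 𝕜 V = Fintype.card ι) {v : F}
    (hv : v ∈ V) : ∑ j, inner 𝕜 (e j) v • e j = v := by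
  have hspan : span 𝕜 (Set.range e) = V :=
    eq_of_le_of_finrank_le (span_le.mpr (Set.range_subset_iff.mpr heV))
      (by rw [hV, finrank_span_eq_card he.linearIndependent])
  rw [← hspan] at hv
  obtain ⟨b, rfl⟩ := (mem_span_range_iff_exists_fun 𝕜).mp hv
  simp_rw [he.inner_right_fintype]

theorem abs_dotProduct_le_Lp_mul_Lq {ι : Type*} [Fintype ι] (u x : ι → ℝ) {p q : ℝ}
    (hpq : p.HolderConjugate q) :
    |u ⬝ᵥ x| ≤ (∑ i, |u i| ^ p) ^ (1 / p) * (∑ i, |x i| ^ q) ^ (1 / q) := by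
  refine (abs_sum_le_sum_abs _ _).trans ?_
  simpa only [abs_mul, abs_abs] using
    Real.inner_le_Lp_mul_Lq univ (fun i => |u i|) (fun i => |x i|) hpq

theorem sum_abs_dotProduct_mulVec_le {m n ι : Type*} [Fintype m] [Fintype n] [Fintype ι]
    (E : ι → m → ℝ) (W : Matrix m n ℝ) (x : n → ℝ) {p q : ℝ} (hpq : p.HolderConjugate q) :
    ∑ j, |E j ⬝ᵥ (W *ᵥ x)| ≤
      (∑ j, (∑ l, |∑ i, W i l * E j i| ^ p) ^ (1 / p)) * (∑ l, |x l| ^ q) ^ (1 / q) := by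
  rw [sum_mul]
  gcongr with j
  have hcol : E j ᵥ* W = fun l => ∑ i, W i l * E j i := by
    ext l; simp [vecMul, dotProduct, mul_comm]
  rw [dotProduct_mulVec, hcol]
  exact abs_dotProduct_le_Lp_mul_Lq _ x hpq

theorem Matrix.mulVec_mem_of_forall_col_mem {R m n : Type*} [CommSemiring R] [Fintype n]
    {V : Submodule R (m → R)} {W : Matrix m n R} (hW : ∀ l, (fun i => W i l) ∈ V) (x : n → R) :
    W *ᵥ x ∈ V := by
  rw [mulVec_eq_sum]
  exact sum_mem fun l _ => by rw [op_smul_eq_smul]; exact V.smul_mem (x l) (hW l)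

theorem toLp_eq_sum_dotProduct_smul {n ι : Type*} [Fintype n] [Fintype ι]
    {V : Submodule ℝ (n → ℝ)} {E : ι → n → ℝ} (hE : Orthonormal ℝ fun j => WithLp.toLp 2 (E j))
    (hEV : ∀ j, E j ∈ V) (hV : finrank ℝ V = Fintype.card ι) {v : n → ℝ} (hv : v ∈ V) :
    WithLp.toLp 2 v = ∑ j, (E j ⬝ᵥ v) • WithLp.toLp 2 (E j) := by
  let L := (WithLp.linearEquiv 2 ℝ (n → ℝ)).symm.toLinearMap
  have := hE.sum_inner_smul_eq_of_mem (V := V.map L) (fun j => mem_map_of_mem (hEV j))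
    (by rw [LinearEquiv.finrank_map_eq, hV]) (mem_map_of_mem hv)
  simpa [L, EuclideanSpace.inner_toLp_toLp, dotProduct_comm] using this.symm

theorem div_natFloor_div_add_one_le (a : ℝ) {c : ℝ} (hc : 0 < c) : a / (⌊a / c⌋₊ + 1) ≤ c := by
  have h := Nat.lt_floor_add_one (a / c)
  rw [div_lt_iff₀ hc] at h
  rw [div_le_iff₀ (by positivity)]
  linarith

section Maurey

variable {F ι : Type*} [NormedAddCommGroup F] [InnerProductSpace ℝ F] [Fintype ι]

theorem exists_le_sum_mul {μ : ι → ℝ} (hμ0 : ∀ u, 0 ≤ μ u) (hμ1 : ∑ u, μ u = 1) (f : ι → ℝ) :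
    ∃ u, f u ≤ ∑ u, μ u * f u := by
  by_contra! h
  obtain ⟨u₀, -, hu₀⟩ := exists_lt_of_sum_lt (s := univ) (f := 0) (g := μ) (by simp [hμ1])
  have := sum_lt_sum (fun u _ => mul_le_mul_of_nonneg_left (h u).le (hμ0 u))
    ⟨u₀, mem_univ _, mul_lt_mul_of_pos_left (h u₀) hu₀⟩
  rw [← sum_mul, hμ1, one_mul] at this
  exact lt_irrefl _ this

theorem sum_mul_norm_sub_sq_s13 {μ : ι → ℝ} (hμ1 : ∑ u, μ u = 1) (w : ι → F) (y : F) :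
    ∑ u, μ u * ‖y - w u‖ ^ 2 =
      ‖y - ∑ u, μ u • w u‖ ^ 2 + (∑ u, μ u * ‖w u‖ ^ 2 - ‖∑ u, μ u • w u‖ ^ 2) := by
  simp_rw [norm_sub_sq_real, inner_sum, inner_smul_right, mul_add, mul_sub, sum_add_distrib,
    sum_sub_distrib, ← sum_mul, hμ1, mul_sum]
  ring_nf

theorem exists_norm_natCast_smul_sub_sum_sq_le {μ : ι → ℝ} (hμ0 : ∀ u, 0 ≤ μ u)
    (hμ1 : ∑ u, μ u = 1) (w : ι → F) (m : ℕ) :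
    ∃ s : Fin m → ι, ‖(m : ℝ) • ∑ u, μ u • w u - ∑ t, w (s t)‖ ^ 2 ≤
      m * (∑ u, μ u * ‖w u‖ ^ 2 - ‖∑ u, μ u • w u‖ ^ 2) := by
  induction m with
  | zero => exact ⟨Fin.elim0, by simp⟩
  | succ m ih =>
    obtain ⟨s, hs⟩ := ih
    set c := ∑ u, μ u • w u
    set σ := ∑ u, μ u * ‖w u‖ ^ 2 - ‖c‖ ^ 2
    set y := ((m : ℝ) + 1) • c - ∑ t, w (s t)
    obtain ⟨u, hu⟩ := exists_le_sum_mul hμ0 hμ1 fun u => ‖y - w u‖ ^ 2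
    refine ⟨Fin.snoc (α := fun _ => ι) s u, ?_⟩
    have hy : y - c = (m : ℝ) • c - ∑ t, w (s t) := by
      simp only [y, add_smul, one_smul]; abel
    calc ‖((m + 1 : ℕ) : ℝ) • c - ∑ t, w (Fin.snoc (α := fun _ => ι) s u t)‖ ^ 2
          = ‖y - w u‖ ^ 2 := by simp [Fin.sum_univ_castSucc, y, sub_add_eq_sub_sub]
      _ ≤ ∑ u, μ u * ‖y - w u‖ ^ 2 := hu
      _ = ‖y - c‖ ^ 2 + σ := sum_mul_norm_sub_sq_s13 hμ1 w y
      _ ≤ m * σ + σ := by rw [hy]; gcongr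
      _ = ((m + 1 : ℕ) : ℝ) * σ := by push_cast; ring

noncomputable def maureyAtom (R : ℝ) (e : ι → F) : Option (ι × Bool) → F
  | none => 0
  | some (j, b) => (if b then R else -R) • e j

noncomputable def maureyWeight (R : ℝ) (a : ι → ℝ) : Option (ι × Bool) → ℝ
  | none => 1 - (∑ j, |a j|) / R
  | some (j, true) => (a j)⁺ / R
  | some (j, false) => (a j)⁻ / R

theorem sum_option_prod_bool {M : Type*} [AddCommMonoid M] (f : Option (ι × Bool) → M) :
    ∑ u, f u = f none + ∑ j, (f (some (j, true)) + f (some (j, false))) := by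
  simp [Fintype.sum_option, Fintype.sum_prod_type]

variable {R : ℝ} {a : ι → ℝ}

theorem sum_maureyWeight : ∑ u, maureyWeight R a u = 1 := by
  simp only [sum_option_prod_bool, maureyWeight, ← add_div, posPart_add_negPart, ← sum_div]
  ring

theorem maureyWeight_nonneg (ha : ∑ j, |a j| ≤ R) (hR : 0 < R) (u : Option (ι × Bool)) :
    0 ≤ maureyWeight R a u := by
  rcases u with _ | ⟨j, _ | _⟩
  · simpa [maureyWeight] using (div_le_one hR).mpr ha
  all_goals exact div_nonneg (by positivity) hR.le

theorem sum_maureyWeight_smul_maureyAtom (e : ι → F) (hR : R ≠ 0) :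
    ∑ u, maureyWeight R a u • maureyAtom R e u = ∑ j, a j • e j := by
  simp only [sum_option_prod_bool, maureyWeight, maureyAtom, smul_zero, zero_add, if_true,
    Bool.false_eq_true, if_false, smul_smul, ← add_smul]
  refine sum_congr rfl fun j _ => ?_
  congr 1
  field_simp
  rw [← sub_eq_add_neg, posPart_sub_negPart]

theorem sum_maureyWeight_mul_norm_maureyAtom_sq_le {e : ι → F} (he : ∀ j, ‖e j‖ ≤ 1)
    (ha : ∑ j, |a j| ≤ R) (hR : 0 < R) :
    ∑ u, maureyWeight R a u * ‖maureyAtom R e u‖ ^ 2 ≤ R ^ 2 := by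
  calc ∑ u, maureyWeight R a u * ‖maureyAtom R e u‖ ^ 2 = R * ∑ j, |a j| * ‖e j‖ ^ 2 := by
        simp only [sum_option_prod_bool, maureyWeight, maureyAtom, norm_zero, norm_smul,
          if_true, Bool.false_eq_true, if_false, norm_neg, Real.norm_eq_abs, abs_of_pos hR,
          mul_sum, ne_eq, OfNat.ofNat_ne_zero, not_false_eq_true, zero_pow, mul_zero, zero_add]
        refine sum_congr rfl fun j _ => ?_
        rw [← posPart_add_negPart]
        field_simp
    _ ≤ R * ∑ j, |a j| := by
        gcongr with j
        exact mul_le_of_le_one_right (abs_nonneg _) (pow_le_one₀ (norm_nonneg _) (he j))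
    _ ≤ R ^ 2 := by nlinarith

open Classical in
noncomputable def maureyNet (R : ℝ) (e : ι → F) (m : ℕ) : Finset F :=
  univ.image fun s : Fin m → Option (ι × Bool) => (m : ℝ)⁻¹ • ∑ t, maureyAtom R e (s t)

theorem card_maureyNet_le (R : ℝ) (e : ι → F) (m : ℕ) :
    #(maureyNet R e m) ≤ (2 * Fintype.card ι + 1) ^ m := by
  classical
  refine card_image_le.trans_eq ?_
  simp [Fintype.card_option, Fintype.card_prod, mul_comm]

theorem log_card_maureyNet_le (R : ℝ) (e : ι → F) (m : ℕ) :
    Real.log #(maureyNet R e m) ≤ m * Real.log (2 * Fintype.card ι + 1) := by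
  classical
  have hpos : 0 < #(maureyNet R e m) := (univ_nonempty.image _).card_pos
  calc Real.log #(maureyNet R e m) ≤ Real.log (((2 * Fintype.card ι + 1) ^ m : ℕ) : ℝ) :=
        Real.log_le_log (by exact_mod_cast hpos) (by exact_mod_cast card_maureyNet_le R e m)
    _ = m * Real.log (2 * Fintype.card ι + 1) := by push_cast; rw [Real.log_pow]

theorem smul_sum_maureyAtom_mem_maureyNet (R : ℝ) (e : ι → F) {m : ℕ}
    (s : Fin m → Option (ι × Bool)) :
    (m : ℝ)⁻¹ • ∑ t, maureyAtom R e (s t) ∈ maureyNet R e m := by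
  classical
  exact mem_image_of_mem _ (mem_univ s)

theorem zero_mem_maureyNet (R : ℝ) (e : ι → F) (m : ℕ) : 0 ∈ maureyNet R e m := by
  simpa [maureyAtom] using smul_sum_maureyAtom_mem_maureyNet R e fun _ : Fin m => none

theorem exists_mem_maureyNet_norm_sub_sq_le {e : ι → F} (he : ∀ j, ‖e j‖ ≤ 1)
    (ha : ∑ j, |a j| ≤ R) (m : ℕ) :
    ∃ v ∈ maureyNet R e m, ‖∑ j, a j • e j - v‖ ^ 2 ≤ R ^ 2 / (m + 1) := by
  set y := ∑ j, a j • e j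
  have hyR : ‖y‖ ≤ R := by
    refine (norm_sum_le _ _).trans ((sum_le_sum fun j _ => ?_).trans ha)
    rw [norm_smul, Real.norm_eq_abs]
    exact mul_le_of_le_one_right (abs_nonneg _) (he j)
  have hyR2 : ‖y‖ ^ 2 ≤ R ^ 2 := pow_le_pow_left₀ (norm_nonneg _) hyR 2
  by_cases hsmall : ‖y‖ ^ 2 ≤ R ^ 2 / (m + 1)
  · exact ⟨0, zero_mem_maureyNet R e m, by simpa using hsmall⟩
  rw [not_le] at hsmall
  have hR : 0 < R := by
    have : 0 ≤ R ^ 2 / (m + 1) := by positivity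
    nlinarith [norm_nonneg y]
  have hm : (0 : ℝ) < m := by
    rcases Nat.eq_zero_or_pos m with rfl | hm
    · exact absurd hsmall (not_lt.mpr (by simpa using hyR2))
    · exact_mod_cast hm
  obtain ⟨s, hs⟩ := exists_norm_natCast_smul_sub_sum_sq_le (maureyWeight_nonneg ha hR)
    sum_maureyWeight (maureyAtom R e) m
  rw [sum_maureyWeight_smul_maureyAtom e hR.ne'] at hs
  refine ⟨_, smul_sum_maureyAtom_mem_maureyNet R e s, ?_⟩
  have hvar := sum_maureyWeight_mul_norm_maureyAtom_sq_le he ha hR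
  have hscale : y - (m : ℝ)⁻¹ • ∑ t, maureyAtom R e (s t) =
      (m : ℝ)⁻¹ • ((m : ℝ) • y - ∑ t, maureyAtom R e (s t)) := by
    rw [smul_sub, inv_smul_smul₀ hm.ne']
  rw [hscale, norm_smul, mul_pow, norm_inv, Real.norm_natCast]
  calc (m : ℝ)⁻¹ ^ 2 * ‖(m : ℝ) • y - ∑ t, maureyAtom R e (s t)‖ ^ 2
      ≤ (m : ℝ)⁻¹ ^ 2 * (m * (R ^ 2 - ‖y‖ ^ 2)) := by
        gcongr
        exact hs.trans (mul_le_mul_of_nonneg_left (by linarith) hm.le)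
    _ = (R ^ 2 - ‖y‖ ^ 2) / m := by field_simp
    _ ≤ R ^ 2 / (m + 1) := by
      rw [div_le_div_iff₀ hm (by positivity)]
      rw [div_lt_iff₀ (by positivity)] at hsmall
      nlinarith

end Maurey

theorem stmt_13_general (k d r_w : ℕ) (B_w B_x : ℝ)
    (p q : ℝ) (hp : 1 ≤ p) (hq : 1 ≤ q) (hpq : 1 / p + 1 / q = 1)
    (V : Submodule ℝ (Fin k → ℝ)) (hV : Module.finrank ℝ V = r_w)
    (E : Fin r_w → (Fin k → ℝ))
    (hEV : ∀ j, E j ∈ V)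
    (hE : ∀ j j' : Fin r_w, (∑ i, E j i * E j' i) = if j = j' then 1 else 0)
    (ε : ℝ) (hε : 0 < ε)
    (x : Fin d → ℝ) (hx : (∑ l, |x l| ^ q) ^ (1 / q) ≤ B_x) :
    ∃ N : Finset (Fin k → ℝ),
      Real.log N.card ≤ (B_x ^ 2 * B_w ^ 2 / ε ^ 2) * Real.log (2 * (r_w : ℝ) + 1) ∧
      ∀ W : Matrix (Fin k) (Fin d) ℝ,
        (∀ l, (fun i => W i l) ∈ V) →
        (∑ j, (∑ l, |∑ i, W i l * E j i| ^ p) ^ (1 / p)) ≤ B_w →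
          ∃ v ∈ N, Real.sqrt (∑ i, (W.mulVec x i - v i) ^ 2) ≤ ε := by
  set e : Fin r_w → EuclideanSpace ℝ (Fin k) := fun j => WithLp.toLp 2 (E j)
  have he : Orthonormal ℝ e := orthonormal_iff_ite.mpr fun j j' => by
    simpa [e, EuclideanSpace.inner_toLp_toLp, dotProduct, mul_comm] using hE j j'
  have hpq' : p.HolderConjugate q := ⟨by simpa using hpq, by linarith, by linarith⟩
  have ht : B_x ^ 2 * B_w ^ 2 / ε ^ 2 = (B_w * B_x) ^ 2 / ε ^ 2 := by ring
  set m := ⌊(B_w * B_x) ^ 2 / ε ^ 2⌋₊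
  refine ⟨(maureyNet (B_w * B_x) e m).map (WithLp.equiv 2 _).toEmbedding, ?_, fun W hW hWB => ?_⟩
  · rw [card_map, ht]
    refine (log_card_maureyNet_le _ e m).trans ?_
    rw [Fintype.card_fin]
    gcongr
    · exact Real.log_nonneg (by simp)
    · exact Nat.floor_le (by positivity)
  · have hxq : 0 ≤ (∑ l, |x l| ^ q) ^ (1 / q) := by positivity
    have hWB₀ : 0 ≤ ∑ j, (∑ l, |∑ i, W i l * E j i| ^ p) ^ (1 / p) :=
      sum_nonneg fun j _ => Real.rpow_nonneg (sum_nonneg fun l _ => by positivity) _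
    have ha := (sum_abs_dotProduct_mulVec_le E W x hpq').trans
      (mul_le_mul hWB hx hxq (hWB₀.trans hWB))
    obtain ⟨v, hv, hvε⟩ := exists_mem_maureyNet_norm_sub_sq_le (e := e) (fun j => (he.1 j).le) ha m
    refine ⟨v.ofLp, mem_map_of_mem _ hv, (Real.sqrt_le_left hε.le).mpr ?_⟩
    rw [← toLp_eq_sum_dotProduct_smul he hEV (by simpa using hV)
      (mulVec_mem_of_forall_col_mem hW x)] at hvε
    calc ∑ i, ((W *ᵥ x) i - v i) ^ 2 = ‖WithLp.toLp 2 (W *ᵥ x) - v‖ ^ 2 := by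
          simp [EuclideanSpace.real_norm_sq_eq]
      _ ≤ ε ^ 2 := hvε.trans (div_natFloor_div_add_one_le _ (by positivity))

theorem stmt_13 (k d r_w : ℕ) (hr : 1 ≤ r_w) (B_w B_x : ℝ)
    (hBw : 0 < B_w) (hBx : 0 < B_x)
    (p q : ℝ) (hp : 1 ≤ p) (hq : 1 ≤ q) (hpq : 1 / p + 1 / q = 1)
    (V : Submodule ℝ (Fin k → ℝ)) (hV : Module.finrank ℝ V = r_w)
    (E : Fin r_w → (Fin k → ℝ))
    (hEV : ∀ j, E j ∈ V)
    (hE : ∀ j j' : Fin r_w, (∑ i, E j i * E j' i) = if j = j' then 1 else 0)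
    (ε : ℝ) (hε : 0 < ε)
    (x : Fin d → ℝ) (hx : (∑ l, |x l| ^ q) ^ (1 / q) ≤ B_x) :
    ∃ N : Finset (Fin k → ℝ),
      Real.log N.card ≤ (B_x ^ 2 * B_w ^ 2 / ε ^ 2) * Real.log (2 * (r_w : ℝ) + 1) ∧
      ∀ W : Matrix (Fin k) (Fin d) ℝ,
        (∀ l, (fun i => W i l) ∈ V) →
        (∑ j, (∑ l, |∑ i, W i l * E j i| ^ p) ^ (1 / p)) ≤ B_w →
          ∃ v ∈ N, Real.sqrt (∑ i, (W.mulVec x i - v i) ^ 2) ≤ ε :=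
  stmt_13_general k d r_w B_w B_x p q hp hq hpq V hV E hEV hE ε hε x hx
end

section
/- Let W ∈ ℝ^{k×d} with entrywise norm ‖W‖_{1,1} := Σ_{i,j}|w_{ij}| ≤ B_w, and let x ∈ ℝ^d with ‖x‖₁ ≤ B_x. Then for every ε > 0, the set {Wx : ‖W‖_{1,1} ≤ B_w} admits an ε-cover in ℓ₂ norm of log-cardinality at most (B_x²·B_w²/ε²)·log(2k + 1). -/
open Finset

/-!
Maurey's empirical method. `y = W x` has `ℓ₁`-norm at most `R = B_w B_x`, so it lies in the convex
hull of the `2k + 1` points `0, ±R eᵢ`, all of norm `|R|` or less. If `a` is drawn from a convex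
combination representing `y`, then `𝔼‖w + (a - y)‖² = ‖w‖² + 𝔼‖a‖² - ‖y‖²`, so points
`a₁, …, aₙ` can be chosen one at a time with `‖∑ aⱼ - n y‖² ≤ n (R² - ‖y‖²)`. Their average is
then `ε`-close to `y` as soon as `R² ≤ (n + 1) ε²`, unless `‖y‖ ≤ ε` already and the average `0`
does. For `n = ⌊R² / ε²⌋` there are at most `(2k + 1) ^ n` such averages.
-/

section Maurey

variable {E : Type*} [NormedAddCommGroup E] [InnerProductSpace ℝ E]

theorem exists_mem_norm_add_sub_sq_le {A : Set E} {R : ℝ} (hA : ∀ a ∈ A, ‖a‖ ≤ R)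
    {y : E} (hy : y ∈ convexHull ℝ A) (w : E) :
    ∃ a ∈ A, ‖w + (a - y)‖ ^ 2 ≤ ‖w‖ ^ 2 + (R ^ 2 - ‖y‖ ^ 2) := by
  -- `‖w + (a - y)‖ ^ 2 - ‖a‖ ^ 2 = g a` is affine in `a`, so it is minimised on `A`.
  let g : E → ℝ := fun a => ‖w - y‖ ^ 2 + innerₛₗ ℝ ((2 : ℝ) • (w - y)) a
  have hg : ConcaveOn ℝ Set.univ g :=
    (concaveOn_const _ convex_univ).add ((innerₛₗ ℝ ((2 : ℝ) • (w - y))).concaveOn convex_univ)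
  obtain ⟨a, haA, hga⟩ := hg.exists_le_of_mem_convexHull (Set.subset_univ A) hy
  have hgy : g y = ‖w‖ ^ 2 - ‖y‖ ^ 2 := by
    simp only [g, innerₛₗ_apply_apply, real_inner_smul_left, norm_sub_sq_real, inner_sub_left,
      real_inner_self_eq_norm_sq]
    ring
  have hga' : ‖w + (a - y)‖ ^ 2 = g a + ‖a‖ ^ 2 := by
    rw [show w + (a - y) = (w - y) + a by abel, norm_add_sq_real]
    simp only [g, innerₛₗ_apply_apply, real_inner_smul_left]
  have ha : ‖a‖ ^ 2 ≤ R ^ 2 := pow_le_pow_left₀ (norm_nonneg a) (hA a haA) 2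
  exact ⟨a, haA, by linarith⟩

theorem exists_sum_sub_nsmul_norm_sq_le {A : Set E} {R : ℝ} (hA : ∀ a ∈ A, ‖a‖ ≤ R)
    {y : E} (hy : y ∈ convexHull ℝ A) (n : ℕ) :
    ∃ a : Fin n → E, (∀ j, a j ∈ A) ∧ ‖∑ j, a j - n • y‖ ^ 2 ≤ n * (R ^ 2 - ‖y‖ ^ 2) := by
  induction n with
  | zero => exact ⟨Fin.elim0, fun j => j.elim0, by simp⟩
  | succ n ih =>
    obtain ⟨a, haA, ha⟩ := ih
    obtain ⟨b, hbA, hb⟩ := exists_mem_norm_add_sub_sq_le hA hy (∑ j, a j - n • y)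
    refine ⟨Fin.cons b a, Fin.cases hbA haA, ?_⟩
    have hsum : ∑ j, Fin.cons b a j - (n + 1) • y = (∑ j, a j - n • y) + (b - y) := by
      rw [Fin.sum_cons, succ_nsmul]; abel
    rw [hsum]
    push_cast
    linarith

open Classical in
noncomputable def Finset.averages (A : Finset E) (n : ℕ) : Finset E :=
  (Fintype.piFinset fun _ : Fin n => A).image fun a => (n : ℝ)⁻¹ • ∑ j, a j

theorem Finset.card_averages_le (A : Finset E) (n : ℕ) : #(A.averages n) ≤ #A ^ n := by
  classical
  exact card_image_le.trans (Fintype.card_piFinset_const A n).le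

theorem Finset.zero_mem_averages {A : Finset E} (h0 : 0 ∈ A) (n : ℕ) : 0 ∈ A.averages n := by
  classical
  exact mem_image.2 ⟨fun _ => 0, by simp [h0], by simp⟩

theorem Finset.exists_mem_averages_norm_sub_le {A : Finset E} (h0 : 0 ∈ A) {R : ℝ}
    (hA : ∀ a ∈ A, ‖a‖ ≤ R) {y : E} (hy : y ∈ convexHull ℝ (A : Set E)) {ε : ℝ} (hε : 0 ≤ ε)
    {n : ℕ} (hn : R ^ 2 ≤ (n + 1) * ε ^ 2) : ∃ v ∈ A.averages n, ‖y - v‖ ≤ ε := by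
  classical
  by_cases hyε : ‖y‖ ≤ ε
  · exact ⟨0, zero_mem_averages h0 n, by simpa⟩
  push Not at hyε
  have hyR : ‖y‖ ≤ R := mem_closedBall_zero_iff.1 <|
    convexHull_min (fun a ha => mem_closedBall_zero_iff.2 (hA a ha)) (convex_closedBall 0 R) hy
  have hn0 : 0 < (n : ℝ) := by nlinarith
  obtain ⟨a, haA, ha⟩ := exists_sum_sub_nsmul_norm_sq_le hA hy n
  refine ⟨(n : ℝ)⁻¹ • ∑ j, a j, mem_image_of_mem _ (Fintype.mem_piFinset.2 haA), ?_⟩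
  have hdiff : y - (n : ℝ)⁻¹ • ∑ j, a j = (-(n : ℝ)⁻¹) • (∑ j, a j - n • y) := by
    rw [← Nat.cast_smul_eq_nsmul ℝ, smul_sub, smul_smul, neg_mul, inv_mul_cancel₀ hn0.ne',
      neg_smul, neg_smul, one_smul]
    abel
  have hsq : ‖y - (n : ℝ)⁻¹ • ∑ j, a j‖ ^ 2 ≤ ε ^ 2 := by
    rw [hdiff, norm_smul, mul_pow, norm_neg, norm_inv, Real.norm_natCast, inv_pow,
      inv_mul_le_iff₀ (by positivity)]
    have hεy : ε ^ 2 ≤ ‖y‖ ^ 2 := pow_le_pow_left₀ hε hyε.le 2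
    calc ‖∑ j, a j - n • y‖ ^ 2 ≤ n * (R ^ 2 - ‖y‖ ^ 2) := ha
      _ ≤ n * (n * ε ^ 2) := by gcongr; linarith
      _ = n ^ 2 * ε ^ 2 := by ring
  exact pow_le_pow_iff_left₀ (norm_nonneg _) hε two_ne_zero |>.1 hsq

end Maurey

section CrossPolytope

variable {ι : Type*} [Fintype ι] [DecidableEq ι]

variable (ι) in
open Classical in
noncomputable def crossPolytopeVertices (R : ℝ) :
    Finset (EuclideanSpace ℝ ι) :=
  insert 0 (univ.image (fun i => EuclideanSpace.single i R) ∪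
    univ.image fun i => EuclideanSpace.single i (-R))

theorem zero_mem_crossPolytopeVertices (R : ℝ) : 0 ∈ crossPolytopeVertices ι R := by
  classical
  exact mem_insert_self _ _

theorem card_crossPolytopeVertices_le (R : ℝ) :
    #(crossPolytopeVertices ι R) ≤ 2 * Fintype.card ι + 1 := by
  classical
  calc #(crossPolytopeVertices ι R)
      ≤ #(univ.image fun i : ι => EuclideanSpace.single i R) +
          #(univ.image fun i : ι => EuclideanSpace.single i (-R)) + 1 :=
        (card_insert_le _ _).trans (by gcongr; exact card_union_le _ _)
    _ ≤ 2 * Fintype.card ι + 1 := by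
        have := card_image_le (s := univ) (f := fun i : ι => EuclideanSpace.single i R)
        have := card_image_le (s := univ) (f := fun i : ι => EuclideanSpace.single i (-R))
        simp only [card_univ] at *
        omega

theorem norm_le_of_mem_crossPolytopeVertices {R : ℝ} {a : EuclideanSpace ℝ ι}
    (ha : a ∈ crossPolytopeVertices ι R) : ‖a‖ ≤ |R| := by
  classical
  simp only [crossPolytopeVertices, mem_insert, mem_union, mem_image, mem_univ, true_and] at ha
  rcases ha with rfl | ⟨i, rfl⟩ | ⟨i, rfl⟩ <;> simp

theorem mem_convexHull_crossPolytopeVertices {R : ℝ} {y : EuclideanSpace ℝ ι}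
    (hy : ∑ i, |y i| ≤ R) : y ∈ convexHull ℝ (crossPolytopeVertices ι R : Set _) := by
  classical
  have hC := convex_convexHull ℝ (crossPolytopeVertices ι R : Set (EuclideanSpace ℝ ι))
  have h0 := subset_convexHull ℝ _ (zero_mem_crossPolytopeVertices (ι := ι) R)
  rcases (sum_nonneg fun i _ => abs_nonneg (y i)).trans hy |>.eq_or_lt with rfl | hR
  · have hy0 : y = 0 := by
      ext i
      simpa using (sum_eq_zero_iff_of_nonneg fun i _ => abs_nonneg (y i)).1
        (le_antisymm hy (sum_nonneg fun i _ => abs_nonneg (y i))) i (mem_univ i)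
    exact hy0 ▸ h0
  -- `y` is a convex combination of `0` and the vertices `± R eᵢ` matching the signs of `y i`.
  let w : Option ι → ℝ := fun o => o.elim (1 - ∑ i, |y i| / R) fun i => |y i| / R
  let z : Option ι → EuclideanSpace ℝ ι :=
    fun o => o.elim 0 fun i => EuclideanSpace.single i (if 0 ≤ y i then R else -R)
  have hw₀ : ∀ o ∈ univ, 0 ≤ w o := by
    rintro (_ | i) -
    · simp only [w, Option.elim_none, sub_nonneg, ← sum_div, div_le_one hR, hy]
    · exact div_nonneg (abs_nonneg _) hR.le
  have hw₁ : ∑ o, w o = 1 := by simp [w, Fintype.sum_option]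
  have hz : ∀ o ∈ univ, z o ∈ convexHull ℝ (crossPolytopeVertices ι R : Set _) := by
    rintro (_ | i) -
    · exact h0
    · refine subset_convexHull ℝ _ ?_
      simp only [z, Option.elim_some]
      split_ifs <;> simp [crossPolytopeVertices]
  convert hC.sum_mem hw₀ hw₁ hz
  ext j
  simp [w, z, Fintype.sum_option, Finset.sum_apply, Pi.single_apply]
  split_ifs with h
  · rw [abs_of_nonneg h]; field_simp
  · rw [abs_of_neg (not_le.1 h)]; field_simp

theorem log_card_averages_crossPolytopeVertices_le (R : ℝ) (n : ℕ) :
    Real.log #((crossPolytopeVertices ι R).averages n) ≤ n * Real.log (2 * Fintype.card ι + 1) := by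
  have hpos : (0 : ℝ) < #((crossPolytopeVertices ι R).averages n) :=
    Nat.cast_pos.2 <| card_pos.2 ⟨0, zero_mem_averages (zero_mem_crossPolytopeVertices R) n⟩
  have hcard : (#((crossPolytopeVertices ι R).averages n) : ℝ) ≤ (2 * Fintype.card ι + 1) ^ n := by
    exact_mod_cast (card_averages_le _ n).trans
      (Nat.pow_le_pow_left (card_crossPolytopeVertices_le R) n)
  rw [← Real.log_pow]
  exact Real.log_le_log hpos hcard

theorem exists_mem_averages_crossPolytopeVertices_norm_sub_le {R ε : ℝ} (hε : 0 ≤ ε) {n : ℕ}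
    (hn : R ^ 2 ≤ (n + 1) * ε ^ 2) {y : EuclideanSpace ℝ ι} (hy : ∑ i, |y i| ≤ R) :
    ∃ v ∈ (crossPolytopeVertices ι R).averages n, ‖y - v‖ ≤ ε := by
  have hA : ∀ a ∈ crossPolytopeVertices ι R, ‖a‖ ≤ |R| :=
    fun _ => norm_le_of_mem_crossPolytopeVertices
  exact exists_mem_averages_norm_sub_le (zero_mem_crossPolytopeVertices R) hA
    (mem_convexHull_crossPolytopeVertices hy) hε (by rwa [sq_abs])

end CrossPolytope

theorem Matrix.sum_abs_mulVec_le {m n : Type*} [Fintype m] [Fintype n] (W : Matrix m n ℝ)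
    (x : n → ℝ) : ∑ i, |W.mulVec x i| ≤ (∑ i, ∑ l, |W i l|) * ∑ l, |x l| := by
  calc ∑ i, |W.mulVec x i| ≤ ∑ i, ∑ l, |W i l| * ∑ l', |x l'| := by
        gcongr with i
        refine (abs_sum_le_sum_abs _ _).trans (sum_le_sum fun l _ => ?_)
        rw [abs_mul]
        gcongr
        exact single_le_sum (f := fun l => |x l|) (fun _ _ => abs_nonneg _) (mem_univ l)
    _ = (∑ i, ∑ l, |W i l|) * ∑ l, |x l| := by simp only [sum_mul]

theorem stmt_14_general (k d : ℕ) (B_w B_x : ℝ)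
    (ε : ℝ) (hε : 0 < ε)
    (x : Fin d → ℝ) (hx : (∑ l, |x l|) ≤ B_x) :
    ∃ N : Finset (Fin k → ℝ),
      Real.log N.card ≤ (B_x ^ 2 * B_w ^ 2 / ε ^ 2) * Real.log (2 * (k : ℝ) + 1) ∧
      ∀ W : Matrix (Fin k) (Fin d) ℝ,
        (∑ i, ∑ l, |W i l|) ≤ B_w →
          ∃ v ∈ N, Real.sqrt (∑ i, (W.mulVec x i - v i) ^ 2) ≤ ε := by
  obtain ⟨R, hR⟩ : ∃ R, B_w * B_x = R := ⟨_, rfl⟩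
  obtain ⟨n, hn⟩ : ∃ n, ⌊R ^ 2 / ε ^ 2⌋₊ = n := ⟨_, rfl⟩
  let A := crossPolytopeVertices (Fin k) R
  refine ⟨(A.averages n).image WithLp.ofLp, ?_, fun W hW => ?_⟩
  · rw [card_image_of_injective _ (WithLp.ofLp_injective 2)]
    calc Real.log #(A.averages n) ≤ n * Real.log (2 * k + 1) := by
          simpa using log_card_averages_crossPolytopeVertices_le (ι := Fin k) R n
      _ ≤ R ^ 2 / ε ^ 2 * Real.log (2 * k + 1) := by
          gcongr
          · exact Real.log_nonneg (by linarith [(k.cast_nonneg : (0 : ℝ) ≤ k)])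
          · exact hn ▸ Nat.floor_le (by positivity)
      _ = B_x ^ 2 * B_w ^ 2 / ε ^ 2 * Real.log (2 * k + 1) := by rw [← hR]; ring
  · have hRn : R ^ 2 ≤ (n + 1) * ε ^ 2 := by
      rw [← div_le_iff₀ (by positivity)]
      exact hn ▸ (Nat.lt_floor_add_one _).le
    have hy : ∑ i, |W.mulVec x i| ≤ R := hR ▸ (W.sum_abs_mulVec_le x).trans
      (mul_le_mul hW hx (by positivity) ((by positivity : (0 : ℝ) ≤ _).trans hW))
    obtain ⟨v, hv, hyv⟩ := exists_mem_averages_crossPolytopeVertices_norm_sub_le hε.le hRn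
      (y := WithLp.toLp 2 (W.mulVec x)) hy
    exact ⟨v.ofLp, mem_image_of_mem _ hv, by simpa [EuclideanSpace.norm_eq] using hyv⟩

theorem stmt_14 (k d : ℕ) (B_w B_x : ℝ) (hBw : 0 < B_w) (hBx : 0 < B_x)
    (ε : ℝ) (hε : 0 < ε)
    (x : Fin d → ℝ) (hx : (∑ l, |x l|) ≤ B_x) :
    ∃ N : Finset (Fin k → ℝ),
      Real.log N.card ≤ (B_x ^ 2 * B_w ^ 2 / ε ^ 2) * Real.log (2 * (k : ℝ) + 1) ∧
      ∀ W : Matrix (Fin k) (Fin d) ℝ,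
        (∑ i, ∑ l, |W i l|) ≤ B_w →
          ∃ v ∈ N, Real.sqrt (∑ i, (W.mulVec x i - v i) ^ 2) ≤ ε :=
  stmt_14_general k d B_w B_x ε hε x hx
end

section
/- The softmax function on ℝ^T is 2-Lipschitz from the ℓ_∞ norm to the ℓ₁ norm: for all u, v ∈ ℝ^T, ‖softmax(u) − softmax(v)‖₁ ≤ 2·‖u − v‖_∞. -/
noncomputable def softmax {T : ℕ} (u : Fin T → ℝ) : Fin T → ℝ :=
  fun i => Real.exp (u i) / ∑ j, Real.exp (u j)

/-!
Moving the logits by at most `ε` in each coordinate moves the numerator and the normaliser of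
every softmax weight by a factor of at most `e^ε`, so `e^{-ε} p_i ≤ e^ε q_i` and symmetrically.
For probability vectors, comparing `|p_i - q_i|` with `max (p_i, q_i)` and summing turns these
ratio bounds into `‖p - q‖₁ ≤ 2 tanh ε`, and `tanh ε ≤ ε`.
-/

open Finset Real

theorem Real.sinh_le_mul_cosh {x : ℝ} (hx : 0 ≤ x) : sinh x ≤ x * cosh x := by
  have hderiv (t : ℝ) : HasDerivAt (fun t => t * cosh t - sinh t) (t * sinh t) t := by
    simpa using ((hasDerivAt_id' t).fun_mul (hasDerivAt_cosh t)).fun_sub (hasDerivAt_sinh t)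
  have hmono : MonotoneOn (fun t => t * cosh t - sinh t) (Set.Ici 0) :=
    monotoneOn_of_hasDerivWithinAt_nonneg (convex_Ici 0)
      (fun t _ => (hderiv t).continuousAt.continuousWithinAt)
      (fun t _ => (hderiv t).hasDerivWithinAt)
      (fun t ht => mul_nonneg (interior_subset ht) (sinh_nonneg_iff.2 (interior_subset ht)))
  simpa using hmono Set.self_mem_Ici hx hx

theorem sum_abs_sub_le_of_mul_le {ι : Type*} [Fintype ι] {p q : ι → ℝ} {a b : ℝ}
    (hp : ∑ i, p i = 1) (hq : ∑ i, q i = 1)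
    (hpq : ∀ i, a * p i ≤ b * q i) (hqp : ∀ i, a * q i ≤ b * p i) :
    (a + b) * ∑ i, |p i - q i| ≤ 2 * (b - a) := by
  -- `2 max (p, q) = p + q + |p - q|`, and `b |p - q| ≤ (b - a) max (p, q)`
  have hpoint (i : ι) : 2 * b * |p i - q i| ≤ (b - a) * (p i + q i + |p i - q i|) := by
    rcases abs_cases (p i - q i) with ⟨h, -⟩ | ⟨h, -⟩ <;> rw [h] <;>
      linarith [hpq i, hqp i]
  have hsum := sum_le_sum fun i (_ : i ∈ univ) => hpoint i
  rw [← mul_sum, ← mul_sum, sum_add_distrib, sum_add_distrib, hp, hq] at hsum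
  linarith

lemma sum_exp_pos {T : ℕ} (hT : 0 < T) (u : Fin T → ℝ) : 0 < ∑ j, exp (u j) :=
  sum_pos (fun _ _ => exp_pos _) ⟨⟨0, hT⟩, mem_univ _⟩

lemma sum_softmax {T : ℕ} (hT : 0 < T) (u : Fin T → ℝ) : ∑ i, softmax u i = 1 := by
  simp only [softmax, ← sum_div, div_self (sum_exp_pos hT u).ne']

lemma exp_neg_mul_softmax_le {T : ℕ} (hT : 0 < T) {u v : Fin T → ℝ} {ε : ℝ}
    (h : ∀ i, |u i - v i| ≤ ε) (i : Fin T) :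
    exp (-ε) * softmax u i ≤ exp ε * softmax v i := by
  have hexp : exp (-ε) * exp (u i) ≤ exp (v i) := by
    rw [← exp_add, exp_le_exp]; linarith [(abs_le.1 (h i)).2]
  have hsum : ∑ j, exp (v j) ≤ exp ε * ∑ j, exp (u j) := by
    rw [mul_sum]
    refine sum_le_sum fun j _ => ?_
    rw [← exp_add, exp_le_exp]; linarith [(abs_le.1 (h j)).1]
  have hu := sum_exp_pos hT u
  have hv := sum_exp_pos hT v
  simp only [softmax, mul_div_assoc']
  rw [div_le_div_iff₀ hu hv]
  calc exp (-ε) * exp (u i) * ∑ j, exp (v j)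
      ≤ exp (v i) * (exp ε * ∑ j, exp (u j)) :=
        mul_le_mul hexp hsum hv.le (exp_pos _).le
    _ = exp ε * exp (v i) * ∑ j, exp (u j) := by ring

theorem sum_abs_softmax_sub_le {T : ℕ} (hT : 0 < T) {u v : Fin T → ℝ} {ε : ℝ}
    (h : ∀ i, |u i - v i| ≤ ε) : ∑ i, |softmax u i - softmax v i| ≤ 2 * ε := by
  have hε : 0 ≤ ε := (abs_nonneg _).trans (h ⟨0, hT⟩)
  have hratio := sum_abs_sub_le_of_mul_le (sum_softmax hT u) (sum_softmax hT v)
    (exp_neg_mul_softmax_le hT h)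
    (exp_neg_mul_softmax_le hT fun i => (abs_sub_comm _ _).trans_le (h i))
  have htanh := sinh_le_mul_cosh hε
  rw [sinh_eq, cosh_eq] at htanh
  refine le_of_mul_le_mul_left ?_ (add_pos (exp_pos (-ε)) (exp_pos ε))
  linarith

theorem stmt_19 (T : ℕ) (hT : 0 < T) (u v : Fin T → ℝ) :
    (∑ i, |softmax u i - softmax v i|)
      ≤ 2 * Finset.univ.sup' ⟨⟨0, hT⟩, Finset.mem_univ _⟩ (fun i => |u i - v i|) :=
  sum_abs_softmax_sub_le hT fun i => le_sup' (fun i => |u i - v i|) (mem_univ i)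
end
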